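/- For any subset A of ℝ, every open subset of the Hattori space (ℝ, τ_A) is an F_σ set in (ℝ, τ_A); that is, (ℝ, τ_A) is a perfect space. -/

import Mathlib

open Set

/-- The Hattori topology on ℝ: points of `A` have Euclidean neighborhood base
`(x-ε, x+ε)`, points outside `A` have Sorgenfrey neighborhood base `[x, x+ε)`. -/
def hattori (A : Set ℝ) : TopologicalSpace ℝ where
  IsOpen U := ∀ x ∈ U, ∃ ε > (0 : ℝ),
    (x ∈ A → Ioo (x - ε) (x + ε) ⊆ U) ∧ (x ∉ A → Ico x (x + ε) ⊆ U)
  isOpen_univ := fun x _ => ⟨1, one_pos, fun _ => subset_univ _, fun _ => subset_univ _⟩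
  isOpen_inter := by
    intro U V hU hV x hx
    obtain ⟨ε₁, hε₁, h₁, h₁'⟩ := hU x hx.1
    obtain ⟨ε₂, hε₂, h₂, h₂'⟩ := hV x hx.2
    have l1 := min_le_left ε₁ ε₂
    have l2 := min_le_right ε₁ ε₂
    refine ⟨min ε₁ ε₂, lt_min hε₁ hε₂, fun hA => ?_, fun hA => ?_⟩
    · intro y hy
      exact ⟨h₁ hA ⟨by linarith [hy.1], by linarith [hy.2]⟩,
             h₂ hA ⟨by linarith [hy.1], by linarith [hy.2]⟩⟩
    · intro y hy
      exact ⟨h₁' hA ⟨hy.1, by linarith [hy.2]⟩, h₂' hA ⟨hy.1, by linarith [hy.2]⟩⟩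
  isOpen_sUnion := by
    intro S hS x hx
    obtain ⟨U, hU, hxU⟩ := hx
    obtain ⟨ε, hε, h, h'⟩ := hS U hU x hxU
    exact ⟨ε, hε, fun hA => (h hA).trans (subset_sUnion_of_mem hU),
      fun hA => (h' hA).trans (subset_sUnion_of_mem hU)⟩

/-- The Sorgenfrey (lower limit) topology on ℝ. -/
def sorgenfrey : TopologicalSpace ℝ :=
  TopologicalSpace.generateFrom {S | ∃ a b : ℝ, S = Ico a b}

open Filter Topology

/-!
An open set `U` of `τ_A` contains a right half-open interval `[x, x + ε)` at each of its points.
So every point of `U` outside its Euclidean interior is the left end of an open interval lying in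
that interior; these intervals are pairwise disjoint, hence `U \ interior U` is countable. Thus
`Uᶜ = (interior U)ᶜ ∩ (U \ interior U)ᶜ` is a Euclidean `G_δ`, i.e. `U` is a countable union of
Euclidean closed sets, which are `τ_A`-closed because `τ_A` refines the Euclidean topology.
-/
section RightNeighborhoods

variable {α : Type*} [LinearOrder α] [TopologicalSpace α] [OrderTopology α] [NoMaxOrder α]
  {s : Set α}

theorem countable_diff_interior_of_forall_mem_nhdsGE [SecondCountableTopology α]
    (hs : ∀ x ∈ s, s ∈ 𝓝[≥] x) : (s \ interior s).Countable := by
  have hIco : ∀ x ∈ s \ interior s, ∃ y ∈ Ioi x, Ico x y ⊆ s := fun x hx =>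
    mem_nhdsGE_iff_exists_Ico_subset.1 (hs x hx.1)
  choose! y hxy hy using hIco
  have hint : ∀ x ∈ s \ interior s, Ioo x (y x) ⊆ interior s := fun x hx =>
    interior_maximal (Ioo_subset_Ico_self.trans (hy x hx)) isOpen_Ioo
  refine PairwiseDisjoint.countable_of_Ioo (y := y) (fun a ha b hb hab => ?_) hxy
  wlog hlt : a < b generalizing a b
  · exact (this b hb a ha hab.symm (hab.lt_or_gt.resolve_left hlt)).symm
  have hyb : y a ≤ b := not_lt.1 fun h => hb.2 (hint a ha ⟨hlt, h⟩)
  exact disjoint_iff_forall_ne.2 fun u hu v hv => ((hu.2.trans_le hyb).trans hv.1).ne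

theorem isGδ_compl_of_forall_mem_nhdsGE [SecondCountableTopology α] [PerfectlyNormalSpace α]
    (hs : ∀ x ∈ s, s ∈ 𝓝[≥] x) : IsGδ sᶜ := by
  have hsplit : sᶜ = (interior s)ᶜ ∩ (s \ interior s)ᶜ := by
    rw [← compl_union, union_sdiff_cancel interior_subset]
  rw [hsplit]
  exact isOpen_interior.isClosed_compl.isGδ.inter
    (countable_diff_interior_of_forall_mem_nhdsGE hs).isGδ_compl

end RightNeighborhoods

theorem hattori_le (A : Set ℝ) : hattori A ≤ (inferInstance : TopologicalSpace ℝ) := by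
  intro U hU x hx
  obtain ⟨ε, hε, hball⟩ := Metric.isOpen_iff.1 hU x hx
  rw [Real.ball_eq_Ioo] at hball
  exact ⟨ε, hε, fun _ => hball, fun _ => (Ico_subset_Ioo_left (by linarith)).trans hball⟩

theorem mem_nhdsGE_of_isOpen_hattori {A U : Set ℝ} (hU : IsOpen[hattori A] U) {x : ℝ}
    (hx : x ∈ U) : U ∈ 𝓝[≥] x := by
  obtain ⟨ε, hε, hA, hnA⟩ := hU x hx
  refine mem_nhdsGE_iff_exists_Ico_subset.2 ⟨x + ε, by simpa using hε, ?_⟩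
  by_cases h : x ∈ A
  · exact (Ico_subset_Ioo_left (by linarith)).trans (hA h)
  · exact hnA h

theorem stmt17 (A : Set ℝ) (U : Set ℝ) (hU : @IsOpen ℝ (hattori A) U) :
    ∃ F : ℕ → Set ℝ, (∀ n, @IsClosed ℝ (hattori A) (F n)) ∧ U = ⋃ n, F n := by
  obtain ⟨G, hG, hUG⟩ := isGδ_iff_eq_iInter_nat.1 <|
    isGδ_compl_of_forall_mem_nhdsGE fun x hx => mem_nhdsGE_of_isOpen_hattori hU hx
  refine ⟨fun n => (G n)ᶜ, fun n => (hG n).isClosed_compl.mono (hattori_le A), ?_⟩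
  rw [← compl_iInter, ← hUG, compl_compl]
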